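/- arXiv:2202.03207 — 3 statements merged into one kernel-verified Lean document; each statement's English description precedes it below -/
import Mathlib

section
/- For every nonzero s-sparse multilinear polynomial f over GF(2) in n variables, there exists an assignment a ∈ {0,1}^n of Hamming weight at least n − ⌊log₂ s⌋ with f(a)=1. -/
open scoped symmDiff

def evalGF2 {n : ℕ} (P : Finset (Finset (Fin n))) (x : Fin n → Bool) : Bool :=
  decide (Odd (P.filter (fun M => ∀ i ∈ M, x i = true)).card)

def hammingWt {n : ℕ} (a : Fin n → Bool) : ℕ :=
  (Finset.univ.filter (fun i => a i = true)).card

/-- Sum-form evaluation over `ZMod 2`. -/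
def sumEval {n : ℕ} (P : Finset (Finset (Fin n))) (x : Fin n → Bool) : ZMod 2 :=
  ∑ N ∈ P, ∏ j ∈ N, (if x j then (1 : ZMod 2) else 0)

lemma gf2_prod_indicator {n : ℕ} (N : Finset (Fin n)) (x : Fin n → Bool) :
    (∏ j ∈ N, (if x j then (1 : ZMod 2) else 0))
      = if (∀ j ∈ N, x j = true) then 1 else 0 := by
  by_cases h : ∀ j ∈ N, x j = true
  · rw [if_pos h]
    exact Finset.prod_eq_one (fun j hj => by simp [h j hj])
  · rw [if_neg h]
    push_neg at h
    obtain ⟨j, hj, hx⟩ := h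
    exact Finset.prod_eq_zero hj (by simp [hx])

lemma sumEval_eq_card {n : ℕ} (P : Finset (Finset (Fin n))) (x : Fin n → Bool) :
    sumEval P x = ((P.filter (fun M => ∀ i ∈ M, x i = true)).card : ZMod 2) := by
  unfold sumEval
  rw [Finset.sum_congr rfl (fun N _ => gf2_prod_indicator N x)]
  simp [Finset.sum_boole]

lemma evalGF2_iff {n : ℕ} (P : Finset (Finset (Fin n))) (x : Fin n → Bool) :
    evalGF2 P x = true ↔ sumEval P x = 1 := by
  rw [sumEval_eq_card, evalGF2, decide_eq_true_iff, Nat.odd_iff]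
  set c := (P.filter (fun M => ∀ i ∈ M, x i = true)).card with hc
  rw [← ZMod.natCast_mod c 2]
  rcases Nat.mod_two_eq_zero_or_one c with h | h <;> rw [h] <;> simp

lemma gf2_sum_symmDiff {α : Type*} [DecidableEq α] (g h : Finset α) (f : α → ZMod 2) :
    ∑ M ∈ g ∆ h, f M = (∑ M ∈ g, f M) + ∑ M ∈ h, f M := by
  have h1 : g ∆ h ∪ (g ∩ h) = g ∪ h := by
    ext x
    simp only [Finset.mem_union, Finset.mem_inter, Finset.mem_symmDiff]
    tauto
  have h2 : Disjoint (g ∆ h) (g ∩ h) := by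
    rw [Finset.disjoint_left]
    intro x hx hx2
    rw [Finset.mem_symmDiff] at hx
    rw [Finset.mem_inter] at hx2
    tauto
  have h3 := Finset.sum_union_inter (s₁ := g) (s₂ := h) (f := f)
  rw [← h1, Finset.sum_union h2, add_assoc, CharTwo.add_self_eq_zero, add_zero] at h3
  exact h3

lemma sumEval_update_notMem {n : ℕ} (Q : Finset (Finset (Fin n))) (i : Fin n)
    (hQ : ∀ N ∈ Q, i ∉ N) (a : Fin n → Bool) (b : Bool) :
    sumEval Q (Function.update a i b) = sumEval Q a := by
  unfold sumEval
  refine Finset.sum_congr rfl fun N hN => Finset.prod_congr rfl fun j hj => ?_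
  rw [Function.update_of_ne (fun hji => hQ N hN (by rw [← hji]; exact hj))]

lemma gf2_odd_case {n : ℕ} (P : Finset (Finset (Fin n))) (hodd : Odd P.card) :
    ∃ a : Fin n → Bool, evalGF2 P a = true ∧
      (Finset.univ.filter (fun i => a i = false)).card ≤ Nat.log 2 P.card := by
  refine ⟨fun _ => true, ?_, ?_⟩
  · rw [evalGF2]
    have hfl : P.filter (fun M => ∀ i ∈ M, (fun _ : Fin n => true) i = true) = P :=
      Finset.filter_true_of_mem (fun M _ => fun j _ => rfl)
    rw [hfl]
    exact decide_eq_true hodd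
  · simp

lemma gf2_supp_empty {n : ℕ} (P : Finset (Finset (Fin n))) (hne : P.Nonempty)
    (he : P.biUnion id = ∅) : P.card = 1 := by
  have : P = {∅} := by
    apply Finset.eq_singleton_iff_nonempty_unique_mem.mpr
    refine ⟨hne, fun N hN => ?_⟩
    rw [Finset.eq_empty_iff_forall_notMem]
    intro j hj
    have : j ∈ P.biUnion id := Finset.mem_biUnion.mpr ⟨N, hN, hj⟩
    simp [he] at this
  rw [this]; rfl

lemma gf2_key (m : ℕ) : ∀ {n : ℕ} (P : Finset (Finset (Fin n))), P.Nonempty →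
    (P.biUnion id).card ≤ m →
    ∃ a : Fin n → Bool, evalGF2 P a = true ∧
      (Finset.univ.filter (fun i => a i = false)).card ≤ Nat.log 2 P.card := by
  induction m with
  | zero =>
    intro n P hne hm
    refine gf2_odd_case P ?_
    have he : P.biUnion id = ∅ := Finset.card_eq_zero.mp (Nat.le_zero.mp hm)
    rw [gf2_supp_empty P hne he]
    exact odd_one
  | succ m ih =>
    intro n P hne hm
    by_cases hodd : Odd P.card
    · exact gf2_odd_case P hodd
    -- pick a variable in the support
    have hsupp_ne : (P.biUnion id).Nonempty := by
      rcases Finset.eq_empty_or_nonempty (P.biUnion id) with he | hne'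
      · exact absurd (by rw [gf2_supp_empty P hne he]; exact odd_one) hodd
      · exact hne'
    obtain ⟨i, hi⟩ := hsupp_ne
    obtain ⟨N₀, hN₀, hiN₀⟩ := Finset.mem_biUnion.mp hi
    simp only [id] at hiN₀
    set Pi := P.filter (fun N => i ∈ N) with hPidef
    set H := P.filter (fun N => i ∉ N) with hHdef
    set G := Pi.image (fun N => N.erase i) with hGdef
    have hN₀Pi : N₀ ∈ Pi := Finset.mem_filter.mpr ⟨hN₀, hiN₀⟩
    have hinj : ∀ N ∈ Pi, ∀ N' ∈ Pi, N.erase i = N'.erase i → N = N' := by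
      intro N hN N' hN' he
      have h1 : i ∈ N := (Finset.mem_filter.mp hN).2
      have h2 : i ∈ N' := (Finset.mem_filter.mp hN').2
      rw [← Finset.insert_erase h1, ← Finset.insert_erase h2, he]
    have hGcard : G.card = Pi.card := by
      apply Finset.card_image_of_injOn
      intro N hN N' hN' he
      exact hinj N (by simpa using hN) N' (by simpa using hN') he
    have hGnotmem : ∀ M ∈ G, i ∉ M := by
      intro M hM
      obtain ⟨N, _, rfl⟩ := Finset.mem_image.mp hM
      exact Finset.notMem_erase i N
    have hHnotmem : ∀ M ∈ H, i ∉ M := fun M hM => (Finset.mem_filter.mp hM).2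
    have hGHmem : ∀ M ∈ G ∆ H, M ∈ G ∨ M ∈ H := by
      intro M hM
      rw [Finset.mem_symmDiff] at hM
      tauto
    have hGHnotmem : ∀ M ∈ G ∆ H, i ∉ M := by
      intro M hM
      rcases hGHmem M hM with h | h
      · exact hGnotmem M h
      · exact hHnotmem M h
    have hPcard : Pi.card + H.card = P.card :=
      Finset.card_filter_add_card_filter_not (p := fun N => i ∈ N)
    -- evaluation identities
    have idA : ∀ a : Fin n → Bool, a i = true → sumEval P a = sumEval (G ∆ H) a := by
      intro a ha
      have hsplit : sumEval Pi a + sumEval H a = sumEval P a :=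
        Finset.sum_filter_add_sum_filter_not P (fun N => i ∈ N) _
      have hGPi : sumEval G a = sumEval Pi a := by
        unfold sumEval
        rw [hGdef, Finset.sum_image hinj]
        refine Finset.sum_congr rfl fun N hN => ?_
        have hiN : i ∈ N := (Finset.mem_filter.mp hN).2
        rw [← Finset.mul_prod_erase N _ hiN, ha, if_pos rfl, one_mul]
      show sumEval P a = ∑ M ∈ G ∆ H, ∏ j ∈ M, (if a j then (1 : ZMod 2) else 0)
      rw [gf2_sum_symmDiff]
      rw [← hsplit]
      show sumEval Pi a + sumEval H a = sumEval G a + sumEval H a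
      rw [hGPi]
    have idB : ∀ a : Fin n → Bool, a i = false → sumEval P a = sumEval H a := by
      intro a ha
      have hsplit : sumEval Pi a + sumEval H a = sumEval P a :=
        Finset.sum_filter_add_sum_filter_not P (fun N => i ∈ N) _
      have hPi0 : sumEval Pi a = 0 := by
        refine Finset.sum_eq_zero fun N hN => ?_
        exact Finset.prod_eq_zero (Finset.mem_filter.mp hN).2 (by rw [ha]; simp)
      rw [← hsplit, hPi0, zero_add]
    rcases Finset.eq_empty_or_nonempty (G ∆ H) with hGH | hGH
    · -- G = H : set x_i = 0, recurse on H which has half the monomials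
      have hGeqH : G = H := by
        have := symmDiff_eq_bot.mp (by exact hGH)
        exact this
      have hHne : H.Nonempty := hGeqH ▸ ⟨N₀.erase i, Finset.mem_image_of_mem _ hN₀Pi⟩
      have hPcard2 : P.card = H.card * 2 := by
        have : Pi.card = H.card := by rw [← hGcard, hGeqH]
        omega
      have hsubset : H.biUnion id ⊆ (P.biUnion id).erase i := by
        intro j hj
        obtain ⟨M, hM, hjM⟩ := Finset.mem_biUnion.mp hj
        simp only [id] at hjM
        refine Finset.mem_erase.mpr ⟨fun hji => hHnotmem M hM (hji ▸ hjM), ?_⟩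
        exact Finset.mem_biUnion.mpr ⟨M, (Finset.mem_filter.mp hM).1, hjM⟩
      have hcard_le : (H.biUnion id).card ≤ m := by
        have h1 := Finset.card_le_card hsubset
        have h2 := Finset.card_erase_of_mem hi
        omega
      obtain ⟨a', ha'eval, ha'z⟩ := ih H hHne hcard_le
      refine ⟨Function.update a' i false, ?_, ?_⟩
      · rw [evalGF2_iff]
        rw [idB _ (Function.update_self i false a')]
        rw [sumEval_update_notMem H i hHnotmem]
        exact (evalGF2_iff H a').mp ha'eval
      · have hsub : Finset.univ.filter (fun j => Function.update a' i false j = false) ⊆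
            insert i (Finset.univ.filter (fun j => a' j = false)) := by
          intro j hj
          rw [Finset.mem_filter] at hj
          by_cases hji : j = i
          · rw [hji]
            exact Finset.mem_insert_self i _
          · rw [Function.update_of_ne hji] at hj
            exact Finset.mem_insert_of_mem (Finset.mem_filter.mpr ⟨Finset.mem_univ j, hj.2⟩)
        have h1 := Finset.card_le_card hsub
        have h2 := Finset.card_insert_le i (Finset.univ.filter (fun j => a' j = false))
        have h3 : Nat.log 2 H.card + 1 = Nat.log 2 P.card := by
          rw [hPcard2, Nat.log_mul_base (by norm_num) (Finset.card_ne_zero.mpr hHne)]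
        omega
    · -- G ∆ H nonempty : set x_i = 1, recurse
      have hsubset : (G ∆ H).biUnion id ⊆ (P.biUnion id).erase i := by
        intro j hj
        obtain ⟨M, hM, hjM⟩ := Finset.mem_biUnion.mp hj
        simp only [id] at hjM
        refine Finset.mem_erase.mpr ⟨fun hji => hGHnotmem M hM (hji ▸ hjM), ?_⟩
        rcases hGHmem M hM with hMG | hMH
        · obtain ⟨N, hN, rfl⟩ := Finset.mem_image.mp hMG
          exact Finset.mem_biUnion.mpr ⟨N, (Finset.mem_filter.mp hN).1,
            Finset.mem_of_mem_erase hjM⟩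
        · exact Finset.mem_biUnion.mpr ⟨M, (Finset.mem_filter.mp hMH).1, hjM⟩
      have hcard_le : ((G ∆ H).biUnion id).card ≤ m := by
        have h1 := Finset.card_le_card hsubset
        have h2 := Finset.card_erase_of_mem hi
        omega
      have hGHcard : (G ∆ H).card ≤ P.card := by
        have h1 : G ∆ H ⊆ G ∪ H := by
          intro M hM
          rcases hGHmem M hM with h | h
          · exact Finset.mem_union_left _ h
          · exact Finset.mem_union_right _ h
        have h2 := Finset.card_le_card h1
        have h3 := Finset.card_union_le G H
        omega
      obtain ⟨a', ha'eval, ha'z⟩ := ih (G ∆ H) hGH hcard_le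
      refine ⟨Function.update a' i true, ?_, ?_⟩
      · rw [evalGF2_iff]
        rw [idA _ (Function.update_self i true a')]
        rw [sumEval_update_notMem _ i hGHnotmem]
        exact (evalGF2_iff _ a').mp ha'eval
      · have hsub : Finset.univ.filter (fun j => Function.update a' i true j = false) ⊆
            Finset.univ.filter (fun j => a' j = false) := by
          intro j hj
          rw [Finset.mem_filter] at hj
          by_cases hji : j = i
          · rw [hji, Function.update_self] at hj
            exact absurd hj.2 (by simp)
          · rw [Function.update_of_ne hji] at hj
            exact Finset.mem_filter.mpr ⟨Finset.mem_univ j, hj.2⟩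
        have h1 := Finset.card_le_card hsub
        have h2 := Nat.log_mono_right (b := 2) hGHcard
        omega

/-- every nonzero `s`-sparse multilinear polynomial over GF(2)
has a satisfying assignment of Hamming weight at least `n - ⌊log₂ s⌋`. -/
theorem stmt1 {n s : ℕ} (P : Finset (Finset (Fin n)))
    (hne : P.Nonempty) (hsparse : P.card ≤ s) :
    ∃ a : Fin n → Bool, n - Nat.log 2 s ≤ hammingWt a ∧ evalGF2 P a = true := by
  obtain ⟨a, heval, hz⟩ := gf2_key (P.biUnion id).card P hne le_rfl
  refine ⟨a, ?_, heval⟩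
  have hsum : (Finset.univ.filter (fun i => a i = true)).card +
      (Finset.univ.filter (fun i => ¬ a i = true)).card = n := by
    rw [Finset.card_filter_add_card_filter_not]
    simp
  have heq : (Finset.univ.filter (fun i => ¬ a i = true)).card =
      (Finset.univ.filter (fun i => a i = false)).card := by
    congr 1
    apply Finset.filter_congr
    intro j _
    simp
  have hlog : Nat.log 2 P.card ≤ Nat.log 2 s := Nat.log_mono_right hsparse
  rw [hammingWt]
  omega
end

section
/- Let f be a nonzero s-sparse multilinear polynomial over GF(2) in n variables of degree at most d, and let p ≥ 1/2. If d ≥ ⌊log₂ s⌋ then Pr_{x ~ D_{n,p}}[f(x)=1] ≥ p^{d−⌊log₂ s⌋}(1−p)^{⌊log₂ s⌋}, and if d < ⌊log₂ s⌋ then Pr_{x ~ D_{n,p}}[f(x)=1] ≥ (1−p)^d. -/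
/-- Weight of a point `x ∈ {0,1}^n` under the `p`-product distribution:
each coordinate is independently `1` with probability `p`. -/
noncomputable def prodWeight {n : ℕ} (p : ℝ) (x : Fin n → Bool) : ℝ :=
  ∏ i, (if x i then p else 1 - p)

/-- Probability under the `p`-product distribution `D_{n,p}` of an event. -/
noncomputable def prodProb {n : ℕ} (p : ℝ) (E : (Fin n → Bool) → Prop)
    [DecidablePred E] : ℝ :=
  ∑ x ∈ Finset.univ.filter (fun x : Fin n → Bool => E x), prodWeight p x

namespace Stmt2Aux

open Finset

variable {n : ℕ}

/-- number of satisfied monomials -/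
def cnt (P : Finset (Finset (Fin n))) (x : Fin n → Bool) : ℕ :=
  (P.filter (fun M => ∀ i ∈ M, x i = true)).card

lemma evalGF2_eq (P : Finset (Finset (Fin n))) (x : Fin n → Bool) :
    evalGF2 P x = decide (Odd (cnt P x)) := rfl

lemma eval_congr_parity {P Q : Finset (Finset (Fin n))} {x y : Fin n → Bool}
    (h : cnt P x % 2 = cnt Q y % 2) : evalGF2 P x = evalGF2 Q y := by
  rw [evalGF2_eq, evalGF2_eq, decide_eq_decide, Nat.odd_iff, Nat.odd_iff, h]

/-- weight split over hyperplane -/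
noncomputable def Wt (p : ℝ) (i : Fin n) (x : Fin n → Bool) : ℝ :=
  ∏ j ∈ Finset.univ.erase i, (if x j then p else 1 - p)

lemma prodWeight_eq (p : ℝ) (i : Fin n) (x : Fin n → Bool) :
    prodWeight p x = (if x i then p else 1 - p) * Wt p i x :=
  (Finset.mul_prod_erase univ _ (mem_univ i)).symm

lemma Wt_update (p : ℝ) (i : Fin n) (x : Fin n → Bool) (b : Bool) :
    Wt p i (Function.update x i b) = Wt p i x :=
  Finset.prod_congr rfl fun j hj => by
    rw [Function.update_of_ne (mem_erase.1 hj).1]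

lemma sum_split (i : Fin n) (F : (Fin n → Bool) → ℝ) :
    ∑ x : Fin n → Bool, F x
      = ∑ x ∈ univ.filter (fun x => x i = false),
          (F x + F (Function.update x i true)) := by
  rw [Finset.sum_add_distrib,
    ← Finset.sum_filter_add_sum_filter_not univ (fun x => x i = false) F]
  congr 1
  refine Finset.sum_nbij' (fun x => Function.update x i false)
    (fun x => Function.update x i true) ?_ ?_ ?_ ?_ ?_
  · intro x hx; simp
  · intro x hx; simp
  · intro x hx
    simp only [mem_filter, mem_univ, true_and, Bool.not_eq_false] at hx
    funext j
    rcases eq_or_ne j i with rfl | hj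
    · simp [hx]
    · simp [Function.update_of_ne hj]
  · intro x hx
    simp only [mem_filter, mem_univ, true_and] at hx
    funext j
    rcases eq_or_ne j i with rfl | hj
    · simp [hx]
    · simp [Function.update_of_ne hj]
  · intro x hx
    simp only [mem_filter, mem_univ, true_and, Bool.not_eq_false] at hx
    congr 1
    funext j
    rcases eq_or_ne j i with rfl | hj
    · simp [hx]
    · simp [Function.update_of_ne hj]

lemma sat_update_true (i : Fin n) (x : Fin n → Bool) (M : Finset (Fin n)) :
    (∀ j ∈ M, Function.update x i true j = true) ↔ (∀ j ∈ M.erase i, x j = true) := by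
  constructor
  · intro h j hj
    have := h j (mem_of_mem_erase hj)
    rwa [Function.update_of_ne (ne_of_mem_erase hj)] at this
  · intro h j hj
    rcases eq_or_ne j i with rfl | hne
    · simp
    · rw [Function.update_of_ne hne]
      exact h j (mem_erase.2 ⟨hne, hj⟩)

lemma eval_indep (P : Finset (Finset (Fin n))) (i : Fin n)
    (hP : ∀ M ∈ P, i ∉ M) (x : Fin n → Bool) (b : Bool) :
    evalGF2 P (Function.update x i b) = evalGF2 P x := by
  rw [evalGF2_eq, evalGF2_eq]
  congr 2
  unfold cnt
  congr 1
  refine Finset.filter_congr fun M hM => ?_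
  constructor <;> intro h j hj <;>
    have hne : j ≠ i := fun e => hP M hM (e ▸ hj)
  · have := h j hj; rwa [Function.update_of_ne hne] at this
  · rw [Function.update_of_ne hne]; exact h j hj

lemma erase_injOn (i : Fin n) :
    Set.InjOn (fun M : Finset (Fin n) => M.erase i)
      {M : Finset (Fin n) | i ∈ M} := by
  intro M hM N hN h
  simp only [Set.mem_setOf_eq] at hM hN
  simp only at h
  ext j
  rcases eq_or_ne j i with rfl | hj
  · simp [hM, hN]
  · constructor <;> intro hjm
    · have : j ∈ M.erase i := mem_erase.2 ⟨hj, hjm⟩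
      rw [h] at this
      exact mem_of_mem_erase this
    · have : j ∈ N.erase i := mem_erase.2 ⟨hj, hjm⟩
      rw [← h] at this
      exact mem_of_mem_erase this

lemma card_symmDiff (S T : Finset (Finset (Fin n))) :
    (symmDiff S T).card + 2 * (S ∩ T).card = S.card + T.card := by
  rw [symmDiff_def, Finset.sup_eq_union,
    Finset.card_union_of_disjoint disjoint_sdiff_sdiff]
  have h1 := Finset.card_sdiff_add_card_inter S T
  have h2 := Finset.card_sdiff_add_card_inter T S
  rw [Finset.inter_comm T S] at h2
  omega

lemma filter_symmDiff (S T : Finset (Finset (Fin n))) (q : Finset (Fin n) → Prop)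
    [DecidablePred q] :
    (symmDiff S T).filter q = symmDiff (S.filter q) (T.filter q) := by
  ext M
  simp only [mem_filter, Finset.mem_symmDiff, mem_filter]
  tauto

/-- the key parity identity: evaluating `P` at `update x i true` is the same as
evaluating `symmDiff P0 (P1.erase i)` at `x`. -/
lemma eval_update_true (P : Finset (Finset (Fin n))) (i : Fin n) (x : Fin n → Bool) :
    evalGF2 P (Function.update x i true)
      = evalGF2 (symmDiff (P.filter (fun M => i ∉ M))
          ((P.filter (fun M => i ∈ M)).image (fun M => M.erase i))) x := by
  apply eval_congr_parity
  set P0 := P.filter (fun M => i ∉ M) with hP0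
  set P1 := P.filter (fun M => i ∈ M) with hP1
  set E := P1.image (fun M => M.erase i) with hE
  set x' := Function.update x i true with hx'
  -- split cnt P x'
  have hsplit : cnt P1 x' + cnt P0 x' = cnt P x' := by
    unfold cnt
    have h := Finset.card_filter_add_card_filter_not
      (s := P.filter (fun M => ∀ j ∈ M, x' j = true)) (fun M : Finset (Fin n) => i ∈ M)
    rw [Finset.filter_comm (fun M => ∀ j ∈ M, x' j = true) (fun M => i ∈ M),
      Finset.filter_comm (fun M => ∀ j ∈ M, x' j = true) (fun M => ¬ i ∈ M)] at h
    exact h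
  -- P0 part unchanged
  have h0 : cnt P0 x' = cnt P0 x := by
    unfold cnt
    congr 1
    refine Finset.filter_congr fun M hM => ?_
    have hiM : i ∉ M := (mem_filter.1 hM).2
    rw [hx', sat_update_true, Finset.erase_eq_of_notMem hiM]
  -- P1 part equals E part
  have h1 : cnt P1 x' = cnt E x := by
    unfold cnt
    rw [hE, Finset.filter_image, Finset.card_image_of_injOn]
    · congr 1
      refine Finset.filter_congr fun M hM => ?_
      rw [hx', sat_update_true]
    · refine Set.InjOn.mono ?_ (erase_injOn i)
      intro M hM
      simp only [Finset.coe_filter, Set.mem_setOf_eq] at hM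
      exact (mem_filter.1 hM.1).2
  -- symmDiff parity
  have hsd : cnt (symmDiff P0 E) x + 2 * ((P0.filter (fun M => ∀ j ∈ M, x j = true)
      ∩ E.filter (fun M => ∀ j ∈ M, x j = true))).card = cnt P0 x + cnt E x := by
    unfold cnt
    rw [filter_symmDiff]
    exact card_symmDiff _ _
  omega

lemma eval_at_false (P : Finset (Finset (Fin n))) (i : Fin n) (x : Fin n → Bool)
    (hx : x i = false) :
    evalGF2 P x = evalGF2 (P.filter (fun M => i ∉ M)) x := by
  rw [evalGF2_eq, evalGF2_eq]
  congr 2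
  unfold cnt
  congr 1
  rw [Finset.filter_comm]
  symm
  rw [Finset.filter_eq_self]
  intro M hM
  rcases mem_filter.1 hM with ⟨_, hsat⟩
  intro hiM
  have := hsat i hiM
  rw [hx] at this
  exact Bool.false_ne_true this

lemma prodProb_eq_sum (p : ℝ) (P : Finset (Finset (Fin n))) :
    prodProb p (fun x => evalGF2 P x = true)
      = ∑ x : Fin n → Bool, if evalGF2 P x = true then prodWeight p x else 0 := by
  rw [prodProb, Finset.sum_filter]

lemma weight_false (p : ℝ) (i : Fin n) (x : Fin n → Bool) (hxi : x i = false) :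
    prodWeight p x = (1 - p) * Wt p i x := by
  rw [prodWeight_eq p i x, hxi]
  simp

lemma weight_true (p : ℝ) (i : Fin n) (x : Fin n → Bool) :
    prodWeight p (Function.update x i true) = p * Wt p i x := by
  rw [prodWeight_eq p i (Function.update x i true), Wt_update, Function.update_self]
  simp

lemma prodProb_hyperplane (p : ℝ) (i : Fin n) (P : Finset (Finset (Fin n)))
    (hP : ∀ M ∈ P, i ∉ M) :
    prodProb p (fun x => evalGF2 P x = true)
      = ∑ x ∈ univ.filter (fun x => x i = false),
          (if evalGF2 P x = true then Wt p i x else 0) := by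
  rw [prodProb_eq_sum, sum_split i]
  refine Finset.sum_congr rfl fun x hx => ?_
  have hxi : x i = false := by simpa using hx
  have hev : evalGF2 P (Function.update x i true) = evalGF2 P x :=
    eval_indep P i hP x true
  rw [hev, weight_false p i x hxi, weight_true p i x]
  split_ifs with h
  · ring
  · simp

lemma prodProb_split (p : ℝ) (i : Fin n) (P : Finset (Finset (Fin n))) :
    prodProb p (fun x => evalGF2 P x = true)
      = (1 - p) * prodProb p (fun x => evalGF2 (P.filter (fun M => i ∉ M)) x = true)
        + p * prodProb p (fun x => evalGF2 (symmDiff (P.filter (fun M => i ∉ M))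
            ((P.filter (fun M => i ∈ M)).image (fun M => M.erase i))) x = true) := by
  set P0 := P.filter (fun M => i ∉ M) with hP0def
  set Q := symmDiff P0 ((P.filter (fun M => i ∈ M)).image (fun M => M.erase i)) with hQdef
  have hP0i : ∀ M ∈ P0, i ∉ M := fun M hM => (mem_filter.1 hM).2
  have hQi : ∀ M ∈ Q, i ∉ M := by
    intro M hM
    rcases Finset.mem_symmDiff.1 hM with ⟨h, -⟩ | ⟨h, -⟩
    · exact hP0i M h
    · rcases Finset.mem_image.1 h with ⟨N, _, rfl⟩
      exact Finset.notMem_erase i N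
  rw [prodProb_eq_sum, sum_split i,
    prodProb_hyperplane p i P0 hP0i, prodProb_hyperplane p i Q hQi,
    Finset.mul_sum, Finset.mul_sum, ← Finset.sum_add_distrib]
  refine Finset.sum_congr rfl fun x hx => ?_
  have hxi : x i = false := by simpa using hx
  rw [eval_at_false P i x hxi, ← hP0def, eval_update_true P i x, ← hQdef]
  rw [weight_false p i x hxi, weight_true p i x]
  split_ifs with h0 hq hq <;> ring

lemma sum_prodWeight (p : ℝ) : ∑ x : Fin n → Bool, prodWeight p x = 1 := by
  have h := Finset.prod_univ_sum (fun _ : Fin n => (univ : Finset Bool))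
    (fun _ b => if b then p else 1 - p)
  rw [Fintype.piFinset_univ] at h
  have h2 : ∀ i : Fin n, (∑ b ∈ (univ : Finset Bool), if b then p else 1 - p) = 1 := by
    intro i
    rw [Fintype.sum_bool]
    norm_num
  calc ∑ x : Fin n → Bool, prodWeight p x
      = ∏ _i : Fin n, ∑ b ∈ (univ : Finset Bool), (if b then p else 1 - p) := by
        rw [h]; rfl
    _ = 1 := by rw [Finset.prod_congr rfl (fun i _ => h2 i), Finset.prod_const_one]

lemma prodProb_singleton_empty (p : ℝ) :
    prodProb p (fun x => evalGF2 ({∅} : Finset (Finset (Fin n))) x = true) = 1 := by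
  have hall : ∀ x : Fin n → Bool, evalGF2 ({∅} : Finset (Finset (Fin n))) x = true := by
    intro x
    have : (({∅} : Finset (Finset (Fin n))).filter (fun M => ∀ i ∈ M, x i = true))
        = {∅} := Finset.filter_true_of_mem (by simp)
    rw [evalGF2, this, Finset.card_singleton]
    simp [Nat.odd_iff]
  rw [prodProb]
  rw [Finset.filter_true_of_mem (fun x _ => hall x)]
  exact sum_prodWeight p

lemma prodProb_empty (p : ℝ) :
    prodProb p (fun x => evalGF2 (∅ : Finset (Finset (Fin n))) x = true) = 0 := by
  have : ∀ x : Fin n → Bool, ¬(evalGF2 (∅ : Finset (Finset (Fin n))) x = true) := by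
    intro x
    simp [evalGF2]
  rw [prodProb, Finset.filter_false_of_mem (fun x _ => this x), Finset.sum_empty]

lemma prodProb_nonneg {p : ℝ} (hp0 : 0 ≤ p) (hp1 : p ≤ 1)
    (E : (Fin n → Bool) → Prop) [DecidablePred E] : 0 ≤ prodProb p E := by
  refine Finset.sum_nonneg fun x _ => Finset.prod_nonneg fun i _ => ?_
  split <;> linarith

lemma g_anti {p : ℝ} (hp : 1 / 2 ≤ p) (hp1 : p ≤ 1) {d k l : ℕ}
    (hkl : k ≤ l) (hld : l ≤ d) :
    p ^ (d - l) * (1 - p) ^ l ≤ p ^ (d - k) * (1 - p) ^ k := by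
  have h0 : (0:ℝ) ≤ 1 - p := by linarith
  have hpp : 1 - p ≤ p := by linarith
  have h0p : (0:ℝ) ≤ p := by linarith
  calc p ^ (d - l) * (1 - p) ^ l
      = p ^ (d - l) * ((1 - p) ^ (l - k) * (1 - p) ^ k) := by
        rw [← pow_add]; congr 2; omega
    _ ≤ p ^ (d - l) * (p ^ (l - k) * (1 - p) ^ k) := by
        refine mul_le_mul_of_nonneg_left
          (mul_le_mul_of_nonneg_right (pow_le_pow_left₀ h0 hpp _) (pow_nonneg h0 k))
          (pow_nonneg h0p _)
    _ = p ^ (d - k) * (1 - p) ^ k := by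
        rw [← mul_assoc, ← pow_add]; congr 2; omega

lemma main (p : ℝ) (hp : 1 / 2 ≤ p) (hp1 : p ≤ 1) :
    ∀ (k : ℕ) {n d : ℕ} (P : Finset (Finset (Fin n))), (P.sup id).card ≤ k →
      P.Nonempty → (∀ M ∈ P, M.card ≤ d) →
      p ^ (d - min d (Nat.log 2 P.card)) * (1 - p) ^ (min d (Nat.log 2 P.card))
        ≤ prodProb p (fun x => evalGF2 P x = true) := by
  have h0 : (0:ℝ) ≤ 1 - p := by linarith
  have hpp : 1 - p ≤ p := by linarith
  have h0p : (0:ℝ) ≤ p := by linarith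
  have base : ∀ {n d : ℕ} (P : Finset (Finset (Fin n))), P.sup id = ∅ →
      P.Nonempty →
      p ^ (d - min d (Nat.log 2 P.card)) * (1 - p) ^ (min d (Nat.log 2 P.card))
        ≤ prodProb p (fun x => evalGF2 P x = true) := by
    intro n d P hsup hne
    have hPempty : P = {∅} := by
      apply Finset.eq_singleton_iff_nonempty_unique_mem.2
      refine ⟨hne, fun M hM => ?_⟩
      have : M ⊆ P.sup id := Finset.le_sup (f := id) hM
      rw [hsup] at this
      exact Finset.subset_empty.1 this
    rw [hPempty, prodProb_singleton_empty]
    have : Nat.log 2 ({∅} : Finset (Finset (Fin n))).card = 0 := by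
      simp
    rw [this]
    simp only [Nat.min_zero, Nat.sub_zero, pow_zero, mul_one]
    exact pow_le_one₀ h0p hp1
  intro k
  induction k with
  | zero =>
    intro n d P hsup hne hdeg
    exact base P (Finset.card_eq_zero.1 (Nat.le_zero.1 hsup)) hne
  | succ k ih =>
    intro n d P hsup hne hdeg
    by_cases hsupe : P.sup id = ∅
    · exact base P hsupe hne
    · obtain ⟨i, hi⟩ := Finset.nonempty_of_ne_empty hsupe
      obtain ⟨M₀, hM₀P, hiM₀⟩ := Finset.mem_sup.1 hi
      set P0 := P.filter (fun M => i ∉ M) with hP0def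
      set P1 := P.filter (fun M => i ∈ M) with hP1def
      set E := P1.image (fun M => M.erase i) with hEdef
      set Q := symmDiff P0 E with hQdef
      have hsplit := prodProb_split p i P
      rw [← hP0def, ← hP1def, ← hEdef, ← hQdef] at hsplit
      have hP1ne : P1.Nonempty := ⟨M₀, mem_filter.2 ⟨hM₀P, hiM₀⟩⟩
      have hd1 : 1 ≤ d := by
        have h1 : 1 ≤ M₀.card := Finset.card_pos.2 ⟨i, hiM₀⟩
        exact le_trans h1 (hdeg M₀ hM₀P)
      have hcardsplit : P1.card + P0.card = P.card :=
        Finset.card_filter_add_card_filter_not (fun M => i ∈ M)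
      have hinjP1 : Set.InjOn (fun M : Finset (Fin n) => M.erase i) ↑P1 := by
        refine Set.InjOn.mono ?_ (erase_injOn i)
        intro M hM
        exact (mem_filter.1 hM).2
      have hcE : E.card = P1.card := Finset.card_image_of_injOn hinjP1
      have hdegE : ∀ M ∈ E, M.card ≤ d - 1 := by
        intro M hM
        rcases Finset.mem_image.1 hM with ⟨N, hN, rfl⟩
        have hiN : i ∈ N := (mem_filter.1 hN).2
        have : N.card ≤ d := hdeg N (mem_filter.1 hN).1
        rw [Finset.card_erase_of_mem hiN]
        omega
      have hsupP0 : (P0.sup id).card ≤ k := by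
        have hsub : P0.sup id ≤ (P.sup id).erase i := by
          refine Finset.sup_le fun M hM => ?_
          rcases mem_filter.1 hM with ⟨hMP, hiM⟩
          exact Finset.le_iff_subset.2
            (Finset.subset_erase.2 ⟨Finset.le_sup (f := id) hMP, hiM⟩)
        have := Finset.card_le_card (Finset.le_iff_subset.1 hsub)
        rw [Finset.card_erase_of_mem hi] at this
        omega
      have hsupQ : (Q.sup id).card ≤ k := by
        have hsub : Q.sup id ≤ (P.sup id).erase i := by
          refine Finset.sup_le fun M hM => ?_
          refine Finset.le_iff_subset.2 ?_
          rcases Finset.mem_symmDiff.1 hM with ⟨h, -⟩ | ⟨h, -⟩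
          · rcases mem_filter.1 h with ⟨hMP, hiM⟩
            exact Finset.subset_erase.2 ⟨Finset.le_sup (f := id) hMP, hiM⟩
          · rcases Finset.mem_image.1 h with ⟨N, hN, rfl⟩
            have : N ⊆ P.sup id := Finset.le_sup (f := id) (mem_filter.1 hN).1
            exact Finset.erase_subset_erase i this
        have := Finset.card_le_card (Finset.le_iff_subset.1 hsub)
        rw [Finset.card_erase_of_mem hi] at this
        omega
      by_cases hP0e : P0 = ∅
      · -- all monomials contain i : recurse on E with degree d-1
        have hQE : Q = E := by
          rw [hQdef, hP0e, ← Finset.bot_eq_empty, bot_symmDiff]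
        have hcEP : E.card = P.card := by
          rw [hP0e] at hcardsplit
          simp at hcardsplit
          omega
        have hEne : E.Nonempty := by
          rw [← Finset.card_pos, hcE]
          exact Finset.card_pos.2 hP1ne
        have hIH := ih (d := d - 1) E (by rw [← hQE]; exact hsupQ) hEne hdegE
        rw [hsplit, hP0e, hQE, prodProb_empty, mul_zero, zero_add]
        rw [hcEP] at hIH
        set t := Nat.log 2 P.card with htdef
        rcases le_or_gt t (d - 1) with hcase | hcase
        · have hm1 : min (d - 1) t = t := min_eq_right hcase
          have hm : min d t = t := min_eq_right (le_trans hcase (by omega))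
          rw [hm1] at hIH
          rw [hm]
          calc p ^ (d - t) * (1 - p) ^ t
              = p * (p ^ (d - 1 - t) * (1 - p) ^ t) := by
                rw [← mul_assoc, ← pow_succ']
                congr 2
                omega
            _ ≤ p * prodProb p (fun x => evalGF2 E x = true) :=
                mul_le_mul_of_nonneg_left hIH h0p
        · have hm1 : min (d - 1) t = d - 1 := min_eq_left (by omega)
          have hm : min d t = d := min_eq_left (by omega)
          rw [hm1] at hIH
          rw [hm]
          simp only [Nat.sub_self, pow_zero, one_mul]
          calc (1 - p) ^ d = (1 - p) * (1 - p) ^ (d - 1) := by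
                rw [← pow_succ']
                congr 1
                omega
            _ ≤ p * (1 - p) ^ (d - 1) :=
                mul_le_mul_of_nonneg_right hpp (pow_nonneg h0 _)
            _ = p * (p ^ (d - 1 - (d - 1)) * (1 - p) ^ (d - 1)) := by
                simp
            _ ≤ p * prodProb p (fun x => evalGF2 E x = true) :=
                mul_le_mul_of_nonneg_left hIH h0p
      · have hP0ne : P0.Nonempty := Finset.nonempty_of_ne_empty hP0e
        by_cases hQe : Q = ∅
        · -- P0 = E, perfect halving
          have hP0E : P0 = E := symmDiff_eq_bot.1 hQe
          have hc0 : P0.card = P1.card := by rw [hP0E, hcE]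
          have hcP : P.card = 2 * P0.card := by omega
          have hdegP0 : ∀ M ∈ P0, M.card ≤ d - 1 := by
            rw [hP0E]; exact hdegE
          have hIH := ih (d := d - 1) P0 hsupP0 hP0ne hdegP0
          rw [hsplit, hQe, prodProb_empty, mul_zero, add_zero]
          have hc0pos : 1 ≤ P0.card := Finset.card_pos.2 hP0ne
          have hlog : Nat.log 2 P.card = Nat.log 2 P0.card + 1 := by
            rw [hcP, mul_comm]
            exact Nat.log_mul_base (by norm_num) (by omega)
          set t0 := Nat.log 2 P0.card with ht0def
          have hm0 : min (d - 1) t0 = min d (Nat.log 2 P.card) - 1 := by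
            rw [hlog]; omega
          rw [hm0] at hIH
          set m := min d (Nat.log 2 P.card) with hmdef
          have hm1 : 1 ≤ m := by
            rw [hmdef, hlog]; omega
          have hmd : m ≤ d := min_le_left _ _
          calc p ^ (d - m) * (1 - p) ^ m
              = (1 - p) * (p ^ (d - 1 - (m - 1)) * (1 - p) ^ (m - 1)) := by
                rw [← mul_assoc, mul_comm (1-p) (p ^ (d - 1 - (m-1))), mul_assoc,
                  ← pow_succ']
                congr 2
                · omega
                · omega
            _ ≤ (1 - p) * prodProb p (fun x => evalGF2 P0 x = true) :=
                mul_le_mul_of_nonneg_left hIH h0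
        · -- generic case: both branches nonzero
          have hQne : Q.Nonempty := Finset.nonempty_of_ne_empty hQe
          have hdegQ : ∀ M ∈ Q, M.card ≤ d := by
            intro M hM
            rcases Finset.mem_symmDiff.1 hM with ⟨h, -⟩ | ⟨h, -⟩
            · exact hdeg M (mem_filter.1 h).1
            · exact le_trans (hdegE M h) (Nat.sub_le d 1)
          have hdegP0' : ∀ M ∈ P0, M.card ≤ d :=
            fun M hM => hdeg M (mem_filter.1 hM).1
          have hIH0 := ih (d := d) P0 hsupP0 hP0ne hdegP0'
          have hIHQ := ih (d := d) Q hsupQ hQne hdegQ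
          set m := min d (Nat.log 2 P.card) with hmdef
          have hmd : m ≤ d := min_le_left _ _
          have hcard0 : P0.card ≤ P.card := Finset.card_le_card (Finset.filter_subset _ _)
          have hcardQ : Q.card ≤ P.card := by
            have h1 : Q ⊆ P0 ∪ E := by
              rw [hQdef]
              intro M hM
              rcases Finset.mem_symmDiff.1 hM with ⟨h, -⟩ | ⟨h, -⟩
              · exact Finset.mem_union_left _ h
              · exact Finset.mem_union_right _ h
            calc Q.card ≤ (P0 ∪ E).card := Finset.card_le_card h1
              _ ≤ P0.card + E.card := Finset.card_union_le _ _
              _ = P0.card + P1.card := by rw [hcE]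
              _ = P.card := by omega
          have hm0le : min d (Nat.log 2 P0.card) ≤ m :=
            min_le_min le_rfl (Nat.log_mono_right hcard0)
          have hmqle : min d (Nat.log 2 Q.card) ≤ m :=
            min_le_min le_rfl (Nat.log_mono_right hcardQ)
          have hb0 : p ^ (d - m) * (1 - p) ^ m
              ≤ prodProb p (fun x => evalGF2 P0 x = true) :=
            le_trans (g_anti hp hp1 hm0le hmd) hIH0
          have hbQ : p ^ (d - m) * (1 - p) ^ m
              ≤ prodProb p (fun x => evalGF2 Q x = true) :=
            le_trans (g_anti hp hp1 hmqle hmd) hIHQ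
          rw [hsplit]
          calc p ^ (d - m) * (1 - p) ^ m
              = (1 - p) * (p ^ (d - m) * (1 - p) ^ m)
                + p * (p ^ (d - m) * (1 - p) ^ m) := by ring
            _ ≤ (1 - p) * prodProb p (fun x => evalGF2 P0 x = true)
                + p * prodProb p (fun x => evalGF2 Q x = true) :=
              add_le_add (mul_le_mul_of_nonneg_left hb0 h0)
                (mul_le_mul_of_nonneg_left hbQ h0p)

end Stmt2Aux

/-- for a nonzero `s`-sparse degree-`d` polynomial over GF(2)
and `p ≥ 1/2`: if `d ≥ ⌊log₂ s⌋` then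
`Pr_{D_{n,p}}[f=1] ≥ p^{d-⌊log₂ s⌋}(1-p)^{⌊log₂ s⌋}`,
and if `d < ⌊log₂ s⌋` then `Pr_{D_{n,p}}[f=1] ≥ (1-p)^d`. -/
theorem stmt2 {n d s : ℕ} (P : Finset (Finset (Fin n)))
    (hne : P.Nonempty) (hsparse : P.card ≤ s) (hdeg : ∀ M ∈ P, M.card ≤ d)
    (p : ℝ) (hp : 1 / 2 ≤ p) (hp1 : p ≤ 1) :
    (Nat.log 2 s ≤ d →
      prodProb p (fun x => evalGF2 P x = true) ≥
        p ^ (d - Nat.log 2 s) * (1 - p) ^ (Nat.log 2 s)) ∧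
    (d < Nat.log 2 s →
      prodProb p (fun x => evalGF2 P x = true) ≥ (1 - p) ^ d) := by
  have h := Stmt2Aux.main p hp hp1 (P.sup id).card P le_rfl hne hdeg
  constructor
  · intro hds
    have hlog : Nat.log 2 P.card ≤ Nat.log 2 s := Nat.log_mono_right hsparse
    have hle : min d (Nat.log 2 P.card) ≤ Nat.log 2 s :=
      le_trans (min_le_right _ _) hlog
    have hg := Stmt2Aux.g_anti hp hp1 (d := d) hle hds
    exact le_trans hg h
  · intro hds
    have hle : min d (Nat.log 2 P.card) ≤ d := min_le_left _ _
    have hg := Stmt2Aux.g_anti hp hp1 (d := d) hle le_rfl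
    simp only [Nat.sub_self, pow_zero, one_mul] at hg
    exact le_trans hg h
end

section
/- Let f be a nonzero s-sparse multilinear polynomial over GF(2) in n variables of degree at most d, with d ≥ 2⌊log₂ s⌋. Then for p' = (d − ⌊log₂ s⌋)/d, Pr_{x ~ D_{n,p'}}[f(x)=1] ≥ 2^{−H₂(⌊log₂ s⌋/d)·d}, where H₂(x) = −x log₂ x − (1−x) log₂(1−x) is the binary entropy function. -/
/-- The binary entropy function `H₂(x) = -x log₂ x - (1-x) log₂ (1-x)`. -/
noncomputable def binEnt (x : ℝ) : ℝ :=
  -x * Real.logb 2 x - (1 - x) * Real.logb 2 (1 - x)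

open Finset

theorem card_symmDiff_add_two_mul_card_inter {α : Type*} [DecidableEq α] (s t : Finset α) :
    #(symmDiff s t) + 2 * #(s ∩ t) = #s + #t := by
  rw [symmDiff_eq_sup_sdiff_inf, sup_eq_union, inf_eq_inter,
    card_sdiff_of_subset inter_subset_union, two_mul, ← add_assoc,
    Nat.sub_add_cancel (card_le_card inter_subset_union), card_union_add_card_inter]

variable {n : ℕ}

theorem evalGF2_symmDiff (A B : Finset (Finset (Fin n))) (x : Fin n → Bool) :
    evalGF2 (symmDiff A B) x = xor (evalGF2 A x) (evalGF2 B x) := by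
  unfold evalGF2
  set sat : Finset (Fin n) → Prop := fun M => ∀ i ∈ M, x i = true
  have hfilter : (symmDiff A B).filter sat = symmDiff (A.filter sat) (B.filter sat) := by
    ext M; simp only [mem_filter, mem_symmDiff]; tauto
  have hcard := card_symmDiff_add_two_mul_card_inter (A.filter sat) (B.filter sat)
  rw [← hfilter] at hcard
  generalize #((symmDiff A B).filter sat) = c at hcard ⊢
  generalize #(A.filter sat) = a at hcard ⊢
  generalize #(B.filter sat) = b at hcard ⊢
  simp only [Nat.odd_iff]
  by_cases ha : a % 2 = 1 <;> by_cases hb : b % 2 = 1 <;> simp [ha, hb] <;> omega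

theorem evalGF2_eq_xor_filter_filter_not (P : Finset (Finset (Fin n))) (q : Finset (Fin n) → Prop)
    [DecidablePred q] (x : Fin n → Bool) :
    evalGF2 P x = xor (evalGF2 (P.filter q) x) (evalGF2 (P.filter fun M => ¬ q M) x) := by
  rw [← evalGF2_symmDiff, (disjoint_filter_filter_not P P q).symmDiff_eq_sup, sup_eq_union,
    filter_union_filter_not_eq]

theorem evalGF2_image_erase {P : Finset (Finset (Fin n))} {i : Fin n} (hP : ∀ M ∈ P, i ∈ M)
    {x : Fin n → Bool} (hx : x i = true) :
    evalGF2 (P.image (·.erase i)) x = evalGF2 P x := by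
  have hsat (M : Finset (Fin n)) :
      (∀ j ∈ M.erase i, x j = true) ↔ ∀ j ∈ M, x j = true := by
    refine ⟨fun h j hj => ?_, fun h j hj => h j (mem_of_mem_erase hj)⟩
    rcases eq_or_ne j i with rfl | hji
    · exact hx
    · exact h j (mem_erase.mpr ⟨hji, hj⟩)
  unfold evalGF2
  rw [filter_image, filter_congr fun M _ => hsat M, card_image_of_injOn]
  exact (erase_injOn' i).mono fun M hM => hP M (mem_filter.mp hM).1

theorem evalGF2_filter_notMem {P : Finset (Finset (Fin n))} {i : Fin n} {x : Fin n → Bool}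
    (hx : x i = false) : evalGF2 (P.filter (i ∉ ·)) x = evalGF2 P x := by
  rw [evalGF2_eq_xor_filter_filter_not P (i ∈ ·) x]
  suffices evalGF2 (P.filter (i ∈ ·)) x = false by rw [this, Bool.false_xor]
  simp only [evalGF2, decide_eq_false_iff_not]
  convert Nat.not_odd_zero
  rw [card_eq_zero, filter_eq_empty_iff]
  intro M hM hsat
  simp [hsat i (mem_filter.mp hM).2] at hx

theorem evalGF2_update_of_notMem {P : Finset (Finset (Fin n))} {i : Fin n}
    (hP : ∀ M ∈ P, i ∉ M) (x : Fin n → Bool) (b : Bool) :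
    evalGF2 P (Function.update x i b) = evalGF2 P x := by
  unfold evalGF2
  congr 3
  refine filter_congr fun M hM => forall₂_congr fun j hj => ?_
  rw [Function.update_of_ne (ne_of_mem_of_not_mem hj (hP M hM))]

theorem prodWeight_funSplitAt_symm (p : ℝ) (i : Fin n) (b : Bool) (y : {j // j ≠ i} → Bool) :
    prodWeight p ((Equiv.funSplitAt i Bool).symm (b, y))
      = (if b then p else 1 - p) * ∏ j, (if y j then p else 1 - p) := by
  rw [prodWeight, Fintype.prod_eq_mul_prod_compl i,
    prod_subtype (p := (· ≠ i)) ({i}ᶜ : Finset (Fin n)) (fun j => by simp)]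
  refine congrArg₂ _ (by simp) (Fintype.prod_congr _ _ fun j => ?_)
  simp [j.2]

theorem sum_prodWeight_mul (p : ℝ) (i : Fin n) (F : (Fin n → Bool) → ℝ) :
    ∑ x, prodWeight p x * F x
      = p * ∑ x, prodWeight p x * F (Function.update x i true)
        + (1 - p) * ∑ x, prodWeight p x * F (Function.update x i false) := by
  have hsplit : ∀ G : (Fin n → Bool) → ℝ, ∑ x, prodWeight p x * G x
      = ∑ b : Bool, (if b then p else 1 - p) * ∑ y : {j // j ≠ i} → Bool,
          (∏ j, (if y j then p else 1 - p)) * G ((Equiv.funSplitAt i Bool).symm (b, y)) := by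
    intro G
    rw [← (Equiv.funSplitAt i Bool).symm.sum_comp, Fintype.sum_prod_type]
    simp only [prodWeight_funSplitAt_symm, mul_sum, mul_assoc]
  have hupdate : ∀ b b' y, Function.update ((Equiv.funSplitAt i Bool).symm (b', y)) i b
      = (Equiv.funSplitAt i Bool).symm (b, y) := by
    intro b b' y
    ext j
    by_cases hj : j = i
    · subst hj; simp [Equiv.funSplitAt_symm_apply]
    · simp [Equiv.funSplitAt_symm_apply, hj]
  simp only [hsplit, hupdate, Fintype.sum_bool, if_true, Bool.false_eq_true, if_false, ← add_mul]
  ring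

theorem prodProb_eq_sum (p : ℝ) (E : (Fin n → Bool) → Prop) [DecidablePred E] :
    prodProb p E = ∑ x, prodWeight p x * if E x then 1 else 0 := by
  simp [prodProb, sum_filter]

theorem prodProb_eq_add_update (p : ℝ) (i : Fin n) (E : (Fin n → Bool) → Prop)
    [DecidablePred E] :
    prodProb p E = p * prodProb p (fun x => E (Function.update x i true))
      + (1 - p) * prodProb p (fun x => E (Function.update x i false)) := by
  simp only [prodProb_eq_sum]
  exact sum_prodWeight_mul p i _

theorem sum_prodWeight (p : ℝ) : ∑ x : Fin n → Bool, prodWeight p x = 1 := by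
  simp only [prodWeight]
  rw [← Fintype.prod_sum (fun (_ : Fin n) (b : Bool) => if b then p else 1 - p)]
  simp

theorem prodProb_of_forall (p : ℝ) {E : (Fin n → Bool) → Prop} [DecidablePred E]
    (hE : ∀ x, E x) : prodProb p E = 1 := by
  rw [prodProb, filter_true_of_mem fun x _ => hE x, sum_prodWeight]

theorem prodProb_evalGF2_empty (p : ℝ) :
    prodProb p (fun x => evalGF2 (∅ : Finset (Finset (Fin n))) x = true) = 0 := by
  rw [prodProb, filter_false_of_mem fun x _ => by simp [evalGF2], sum_empty]

/-- `f = x_i * derivGF2 f i + restrictFalseGF2 f i`, with neither summand involving `x_i`. -/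
def derivGF2 (P : Finset (Finset (Fin n))) (i : Fin n) : Finset (Finset (Fin n)) :=
  (P.filter (i ∈ ·)).image (·.erase i)

def restrictFalseGF2 (P : Finset (Finset (Fin n))) (i : Fin n) : Finset (Finset (Fin n)) :=
  P.filter (i ∉ ·)

def restrictTrueGF2 (P : Finset (Finset (Fin n))) (i : Fin n) : Finset (Finset (Fin n)) :=
  symmDiff (derivGF2 P i) (restrictFalseGF2 P i)

section Restrict

variable (P : Finset (Finset (Fin n))) (i : Fin n)

theorem notMem_of_mem_derivGF2 : ∀ M ∈ derivGF2 P i, i ∉ M := by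
  intro M hM
  obtain ⟨N, -, rfl⟩ := mem_image.mp hM
  exact notMem_erase i N

theorem notMem_of_mem_restrictFalseGF2 : ∀ M ∈ restrictFalseGF2 P i, i ∉ M :=
  fun _ hM => (mem_filter.mp hM).2

theorem notMem_of_mem_restrictTrueGF2 : ∀ M ∈ restrictTrueGF2 P i, i ∉ M := by
  intro M hM
  rcases mem_symmDiff.mp hM with ⟨hM, -⟩ | ⟨hM, -⟩
  exacts [notMem_of_mem_derivGF2 P i M hM, notMem_of_mem_restrictFalseGF2 P i M hM]

theorem evalGF2_restrictFalseGF2 {x : Fin n → Bool} (hx : x i = false) :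
    evalGF2 (restrictFalseGF2 P i) x = evalGF2 P x :=
  evalGF2_filter_notMem hx

theorem evalGF2_restrictTrueGF2 {x : Fin n → Bool} (hx : x i = true) :
    evalGF2 (restrictTrueGF2 P i) x = evalGF2 P x := by
  rw [restrictTrueGF2, evalGF2_symmDiff, derivGF2,
    evalGF2_image_erase (fun M hM => (mem_filter.mp hM).2) hx,
    evalGF2_eq_xor_filter_filter_not P (i ∈ ·) x, restrictFalseGF2]

theorem prodProb_evalGF2_eq_add (p : ℝ) :
    prodProb p (fun x => evalGF2 P x = true)
      = p * prodProb p (fun x => evalGF2 (restrictTrueGF2 P i) x = true)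
        + (1 - p) * prodProb p (fun x => evalGF2 (restrictFalseGF2 P i) x = true) := by
  have htrue (x : Fin n → Bool) :
      evalGF2 P (Function.update x i true) = evalGF2 (restrictTrueGF2 P i) x := by
    rw [← evalGF2_restrictTrueGF2 P i (Function.update_self i true x),
      evalGF2_update_of_notMem (notMem_of_mem_restrictTrueGF2 P i)]
  have hfalse (x : Fin n → Bool) :
      evalGF2 P (Function.update x i false) = evalGF2 (restrictFalseGF2 P i) x := by
    rw [← evalGF2_restrictFalseGF2 P i (Function.update_self i false x),
      evalGF2_update_of_notMem (notMem_of_mem_restrictFalseGF2 P i)]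
  simp only [prodProb_eq_add_update p i (fun x => evalGF2 P x = true), htrue, hfalse]

theorem card_derivGF2_add_card_restrictFalseGF2 :
    #(derivGF2 P i) + #(restrictFalseGF2 P i) = #P := by
  rw [derivGF2, card_image_of_injOn, restrictFalseGF2, card_filter_add_card_filter_not]
  exact (erase_injOn' i).mono fun M hM => (mem_filter.mp hM).2

theorem card_restrictTrueGF2_le : #(restrictTrueGF2 P i) ≤ #P := by
  rw [← card_derivGF2_add_card_restrictFalseGF2 P i, restrictTrueGF2, symmDiff_eq_sup_sdiff_inf]
  exact (card_le_card sdiff_subset).trans (card_union_le _ _)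

variable {P i}

theorem one_le_of_derivGF2_nonempty {d : ℕ} (hdeg : ∀ M ∈ P, #M ≤ d)
    (h : (derivGF2 P i).Nonempty) : 1 ≤ d := by
  obtain ⟨M', hM'⟩ := h
  obtain ⟨M, hM, -⟩ := mem_image.mp hM'
  obtain ⟨hMP, hiM⟩ := mem_filter.mp hM
  exact (card_pos.mpr ⟨i, hiM⟩).trans_le (hdeg M hMP)

theorem card_le_pred_of_mem_derivGF2 {d : ℕ} (hdeg : ∀ M ∈ P, #M ≤ d) :
    ∀ M ∈ derivGF2 P i, #M ≤ d - 1 := by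
  intro M hM
  obtain ⟨N, hN, rfl⟩ := mem_image.mp hM
  rw [card_erase_of_mem (mem_filter.mp hN).2]
  exact Nat.sub_le_sub_right (hdeg N (mem_filter.mp hN).1) 1

theorem subset_of_mem_derivGF2 {S : Finset (Fin n)} (hsupp : ∀ M ∈ P, M ⊆ insert i S) :
    ∀ M ∈ derivGF2 P i, M ⊆ S := by
  intro M hM
  obtain ⟨N, hN, rfl⟩ := mem_image.mp hM
  exact subset_insert_iff.mp (hsupp N (mem_filter.mp hN).1)

theorem subset_of_mem_restrictFalseGF2 {S : Finset (Fin n)}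
    (hsupp : ∀ M ∈ P, M ⊆ insert i S) :
    ∀ M ∈ restrictFalseGF2 P i, M ⊆ S := by
  intro M hM
  obtain ⟨hMP, hiM⟩ := mem_filter.mp hM
  exact (subset_insert_iff_of_notMem hiM).mp (hsupp M hMP)

theorem card_le_of_mem_restrictTrueGF2 {d : ℕ} (hdeg : ∀ M ∈ P, #M ≤ d) :
    ∀ M ∈ restrictTrueGF2 P i, #M ≤ d := by
  intro M hM
  rcases mem_symmDiff.mp hM with ⟨hM, -⟩ | ⟨hM, -⟩
  · exact (card_le_pred_of_mem_derivGF2 hdeg M hM).trans (Nat.sub_le d 1)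
  · exact hdeg M (mem_filter.mp hM).1

theorem subset_of_mem_restrictTrueGF2 {S : Finset (Fin n)} (hsupp : ∀ M ∈ P, M ⊆ insert i S) :
    ∀ M ∈ restrictTrueGF2 P i, M ⊆ S := by
  intro M hM
  rcases mem_symmDiff.mp hM with ⟨hM, -⟩ | ⟨hM, -⟩
  exacts [subset_of_mem_derivGF2 hsupp M hM, subset_of_mem_restrictFalseGF2 hsupp M hM]

end Restrict

/-- `k` is capped at `d` so that the recursion on the degree stays valid once `d < k`. -/
noncomputable def sparseBound (p : ℝ) (d k : ℕ) : ℝ :=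
  p ^ (d - k) * (1 - p) ^ min k d

section SparseBound

variable {p : ℝ} {d k : ℕ}

theorem sparseBound_le_one (hp0 : 0 ≤ p) (hp1 : p ≤ 1) : sparseBound p d k ≤ 1 :=
  mul_le_one₀ (pow_le_one₀ hp0 hp1) (pow_nonneg (by linarith) _)
    (pow_le_one₀ (by linarith) (by linarith))

theorem sparseBound_le_mul_sparseBound_pred_deg (hp : 1 - p ≤ p) (hp1 : p ≤ 1) (hd : 1 ≤ d) :
    sparseBound p d k ≤ p * sparseBound p (d - 1) k := by
  rcases le_or_gt k (d - 1) with hk | hk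
  · rw [sparseBound, sparseBound, min_eq_left (by omega), min_eq_left hk,
      show d - k = d - 1 - k + 1 by omega, pow_succ]
    exact le_of_eq (by ring)
  · rw [sparseBound, sparseBound, min_eq_right (by omega), min_eq_right (by omega),
      Nat.sub_eq_zero_of_le (by omega), Nat.sub_eq_zero_of_le (by omega),
      show d = d - 1 + 1 by omega, pow_succ, Nat.add_sub_cancel]
    have : 0 ≤ (1 - p) ^ (d - 1) := pow_nonneg (by linarith) _
    nlinarith

theorem sparseBound_eq_mul_sparseBound_pred_pred (hd : 1 ≤ d) (hk : 1 ≤ k) :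
    sparseBound p d k = (1 - p) * sparseBound p (d - 1) (k - 1) := by
  rw [sparseBound, sparseBound, show d - 1 - (k - 1) = d - k by omega,
    show min k d = min (k - 1) (d - 1) + 1 by omega, pow_succ]
  ring

end SparseBound

def SparseBoundOn (p : ℝ) (S : Finset (Fin n)) : Prop :=
  ∀ ⦃d k : ℕ⦄ ⦃P : Finset (Finset (Fin n))⦄, (∀ M ∈ P, M ⊆ S) → P.Nonempty →
    (∀ M ∈ P, #M ≤ d) → #P < 2 ^ (k + 1) →
    sparseBound p d k ≤ prodProb p (fun x => evalGF2 P x = true)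

theorem sparseBoundOn_empty {p : ℝ} (hp0 : 0 ≤ p) (hp1 : p ≤ 1) :
    SparseBoundOn (n := n) p ∅ := by
  intro d k P hsupp hne _ _
  have hP : P = {∅} := hne.subset_singleton_iff.mp fun M hM => by simpa using hsupp M hM
  rw [prodProb_of_forall p fun x => by simp [hP, evalGF2, filter_singleton]]
  exact sparseBound_le_one hp0 hp1

namespace SparseBoundOn

variable {p : ℝ} {S : Finset (Fin n)} {i : Fin n} {P : Finset (Finset (Fin n))} {d k : ℕ}

/-- The case `f = x_i * g`. -/
theorem le_of_restrictFalseGF2_eq_empty (ih : SparseBoundOn p S) (hp : 1 - p ≤ p) (hp1 : p ≤ 1)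
    (hsupp : ∀ M ∈ P, M ⊆ insert i S) (hne : P.Nonempty) (hdeg : ∀ M ∈ P, #M ≤ d)
    (hcard : #P < 2 ^ (k + 1)) (hh : restrictFalseGF2 P i = ∅) :
    sparseBound p d k ≤ prodProb p (fun x => evalGF2 P x = true) := by
  have hcard_g : #(derivGF2 P i) = #P := by
    simpa [hh] using card_derivGF2_add_card_restrictFalseGF2 P i
  have hg : (derivGF2 P i).Nonempty := card_pos.mp (hcard_g ▸ hne.card_pos)
  have hG : restrictTrueGF2 P i = derivGF2 P i := by simp [restrictTrueGF2, hh]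
  calc sparseBound p d k ≤ p * sparseBound p (d - 1) k :=
        sparseBound_le_mul_sparseBound_pred_deg hp hp1 (one_le_of_derivGF2_nonempty hdeg hg)
    _ ≤ p * prodProb p (fun x => evalGF2 (derivGF2 P i) x = true) := by
        have : 0 ≤ p := by linarith
        gcongr
        exact ih (subset_of_mem_derivGF2 hsupp) hg (card_le_pred_of_mem_derivGF2 hdeg)
          (hcard_g ▸ hcard)
    _ = prodProb p (fun x => evalGF2 P x = true) := by
        rw [prodProb_evalGF2_eq_add P i, hG, hh, prodProb_evalGF2_empty, mul_zero, add_zero]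

/-- The case `f = (1 + x_i) * h`, where `f` has twice as many monomials as `h`. -/
theorem le_of_restrictTrueGF2_eq_empty (ih : SparseBoundOn p S) (hp1 : p ≤ 1)
    (hsupp : ∀ M ∈ P, M ⊆ insert i S) (hdeg : ∀ M ∈ P, #M ≤ d)
    (hcard : #P < 2 ^ (k + 1)) (hh : (restrictFalseGF2 P i).Nonempty)
    (hG : restrictTrueGF2 P i = ∅) :
    sparseBound p d k ≤ prodProb p (fun x => evalGF2 P x = true) := by
  have hgh : derivGF2 P i = restrictFalseGF2 P i := symmDiff_eq_bot.mp hG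
  have hcard_P : #P = 2 * #(restrictFalseGF2 P i) := by
    rw [← card_derivGF2_add_card_restrictFalseGF2 P i, hgh, two_mul]
  have hk : 1 ≤ k := by
    by_contra hk0
    rw [Nat.lt_one_iff.mp (not_le.mp hk0)] at hcard
    have := hh.card_pos
    omega
  have hcard_h : #(restrictFalseGF2 P i) < 2 ^ (k - 1 + 1) := by
    rw [Nat.sub_add_cancel hk]
    rw [pow_succ] at hcard
    omega
  calc sparseBound p d k = (1 - p) * sparseBound p (d - 1) (k - 1) :=
        sparseBound_eq_mul_sparseBound_pred_pred (one_le_of_derivGF2_nonempty hdeg (hgh ▸ hh)) hk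
    _ ≤ (1 - p) * prodProb p (fun x => evalGF2 (restrictFalseGF2 P i) x = true) := by
        have : 0 ≤ 1 - p := by linarith
        gcongr
        exact ih (subset_of_mem_restrictFalseGF2 hsupp) hh
          (hgh ▸ card_le_pred_of_mem_derivGF2 hdeg) hcard_h
    _ = prodProb p (fun x => evalGF2 P x = true) := by
        rw [prodProb_evalGF2_eq_add P i, hG, prodProb_evalGF2_empty, mul_zero, zero_add]

theorem le_of_nonempty (ih : SparseBoundOn p S) (hp0 : 0 ≤ p) (hp1 : p ≤ 1)
    (hsupp : ∀ M ∈ P, M ⊆ insert i S) (hdeg : ∀ M ∈ P, #M ≤ d)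
    (hcard : #P < 2 ^ (k + 1)) (hh : (restrictFalseGF2 P i).Nonempty)
    (hG : (restrictTrueGF2 P i).Nonempty) :
    sparseBound p d k ≤ prodProb p (fun x => evalGF2 P x = true) := by
  have hcard_h : #(restrictFalseGF2 P i) < 2 ^ (k + 1) := by
    have := card_derivGF2_add_card_restrictFalseGF2 P i
    omega
  have : 0 ≤ 1 - p := by linarith
  calc sparseBound p d k = p * sparseBound p d k + (1 - p) * sparseBound p d k := by ring
    _ ≤ p * prodProb p (fun x => evalGF2 (restrictTrueGF2 P i) x = true)
        + (1 - p) * prodProb p (fun x => evalGF2 (restrictFalseGF2 P i) x = true) := by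
        gcongr
        · exact ih (subset_of_mem_restrictTrueGF2 hsupp) hG
            (card_le_of_mem_restrictTrueGF2 hdeg) ((card_restrictTrueGF2_le P i).trans_lt hcard)
        · exact ih (subset_of_mem_restrictFalseGF2 hsupp) hh
            (fun M hM => hdeg M (mem_filter.mp hM).1) hcard_h
    _ = prodProb p (fun x => evalGF2 P x = true) := (prodProb_evalGF2_eq_add P i p).symm

theorem insert (ih : SparseBoundOn p S) (hp : 1 - p ≤ p) (hp1 : p ≤ 1) (i : Fin n) :
    SparseBoundOn p (insert i S) := by
  intro d k P hsupp hne hdeg hcard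
  rcases (restrictFalseGF2 P i).eq_empty_or_nonempty with hh | hh
  · exact ih.le_of_restrictFalseGF2_eq_empty hp hp1 hsupp hne hdeg hcard hh
  rcases (restrictTrueGF2 P i).eq_empty_or_nonempty with hG | hG
  · exact ih.le_of_restrictTrueGF2_eq_empty hp1 hsupp hdeg hcard hh hG
  · exact ih.le_of_nonempty (by linarith) hp1 hsupp hdeg hcard hh hG

end SparseBoundOn

theorem sparseBound_le_prodProb_evalGF2 {p : ℝ} (hp : 1 - p ≤ p) (hp1 : p ≤ 1) {d k : ℕ}
    {P : Finset (Finset (Fin n))} (hne : P.Nonempty) (hdeg : ∀ M ∈ P, #M ≤ d)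
    (hcard : #P < 2 ^ (k + 1)) :
    sparseBound p d k ≤ prodProb p (fun x => evalGF2 P x = true) := by
  have hall : SparseBoundOn p (univ : Finset (Fin n)) := by
    induction (univ : Finset (Fin n)) using Finset.induction_on with
    | empty => exact sparseBoundOn_empty (by linarith) hp1
    | insert i S _ ih => exact ih.insert hp hp1 i
  exact hall (fun M _ => subset_univ M) hne hdeg hcard

theorem two_rpow_logb_mul_natCast {x : ℝ} (hx : 0 ≤ x) {m : ℕ} (hm : x = 0 → m = 0) :
    (2 : ℝ) ^ (Real.logb 2 x * m) = x ^ m := by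
  rcases hx.eq_or_lt with rfl | hx
  · simp [hm rfl]
  · rw [Real.rpow_mul zero_le_two, Real.rpow_logb zero_lt_two (by norm_num) hx,
      Real.rpow_natCast]

theorem two_rpow_neg_binEnt_mul {d k : ℕ} (hd : 0 < d) (hkd : k ≤ d) :
    (2 : ℝ) ^ (-(binEnt ((k : ℝ) / d) * d))
      = (((d : ℝ) - k) / d) ^ (d - k) * ((k : ℝ) / d) ^ k := by
  have hd' : (0 : ℝ) < d := Nat.cast_pos.mpr hd
  have hq : 1 - (k : ℝ) / d = ((d - k : ℕ) : ℝ) / d := by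
    rw [Nat.cast_sub hkd]; field_simp
  have hexp : -(binEnt ((k : ℝ) / d) * d)
      = Real.logb 2 (((d - k : ℕ) : ℝ) / d) * (d - k : ℕ)
        + Real.logb 2 ((k : ℝ) / d) * k := by
    rw [binEnt, hq]; field_simp; ring
  rw [hexp, Real.rpow_add zero_lt_two, two_rpow_logb_mul_natCast (by positivity),
    two_rpow_logb_mul_natCast (by positivity), Nat.cast_sub hkd]
  · intro h; simpa [hd.ne'] using h
  · intro h; simp [hd.ne'] at h; omega

/-- for a nonzero `s`-sparse degree-`d` polynomial over GF(2)
with `d ≥ 2⌊log₂ s⌋`, taking `p' = (d - ⌊log₂ s⌋)/d`,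
`Pr_{D_{n,p'}}[f=1] ≥ 2^{-H₂(⌊log₂ s⌋/d)·d}`. -/
theorem stmt3 {n d s : ℕ} (P : Finset (Finset (Fin n)))
    (hne : P.Nonempty) (hsparse : P.card ≤ s) (hdeg : ∀ M ∈ P, M.card ≤ d)
    (hd : 2 * Nat.log 2 s ≤ d) (hdpos : 0 < d)
    (p' : ℝ) (hp' : p' = ((d : ℝ) - Nat.log 2 s) / d) :
    prodProb p' (fun x => evalGF2 P x = true) ≥
      2 ^ (-(binEnt ((Nat.log 2 s : ℝ) / d) * d)) := by
  have hd' : (0 : ℝ) < d := Nat.cast_pos.mpr hdpos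
  have hq : 1 - p' = (Nat.log 2 s : ℝ) / d := by rw [hp']; field_simp; ring
  have hp1 : p' ≤ 1 := by
    rw [hp', div_le_one hd']
    linarith [(Nat.log 2 s).cast_nonneg (α := ℝ)]
  have hp : 1 - p' ≤ p' := by
    rw [hq, hp', div_le_div_iff_of_pos_right hd', le_sub_iff_add_le, ← two_mul]
    exact_mod_cast hd
  have hcard : P.card < 2 ^ (Nat.log 2 s + 1) :=
    hsparse.trans_lt (Nat.lt_pow_succ_log_self one_lt_two s)
  have hbound := sparseBound_le_prodProb_evalGF2 hp hp1 hne hdeg hcard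
  rw [sparseBound, min_eq_left (by omega)] at hbound
  rwa [ge_iff_le, two_rpow_neg_binEnt_mul hdpos (by omega), ← hp', ← hq]
end
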